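/- Let V be a finite set of N nodes partitioned into two sensitive groups S₀ and S₁ of sizes N₀ ≥ 1 and N₁ ≥ 1, with features X : V → ℝ^d and iterates F⁽ᵏ⁾ produced by the fairness-aware message passing. For each k ≥ 0, let Δᵏ ∈ ℝ^d be the componentwise maximal deviation of F⁽ᵏ⁾ from its overall mean, Δᵏ_m = max_{i∈V} |F⁽ᵏ⁾_{i,m} − (1/N)·Σ_{j∈V} F⁽ᵏ⁾_{j,m}|. Then for every k ≥ 1, ‖Δᵏ‖ ≤ (2 + 4/N₀ + 4/N₁)·‖Δᵏ⁻¹‖ + 2·‖Δ⁰‖. -/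

import Mathlib

/-!
Fix a coordinate and write `f = F⁽ᵏ⁻¹⁾`, `Δ = max_i |f_i − mean f|`. The update splits as
`F⁽ᵏ⁾_i = X_i + a_i + t_i`: `a_i` is an average of `f` over a nonempty neighbourhood, hence within
`Δ` of `mean f`, and so is `mean a`; the fairness term `t_i` collects to
`Σ_u w_{iu} k(F_u, F_i) (f_i − f_u)` with symmetric weights, so it sums to zero over `V`, and since
`0 ≤ k ≤ 1` and `|f_i − f_u| ≤ 2Δ` it is at most `4Δ / N_t`. Hence the deviation of `F⁽ᵏ⁾` is at
most `Δ⁰ + (2 + 4/N₀ + 4/N₁) Δ` in each coordinate, and the Euclidean norm is monotone in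
nonnegative coordinates.
-/

open Matrix Finset

/-- RBF kernel `k(x,y) = exp(-α‖x-y‖²)`. -/
noncomputable def ker {d : ℕ} (α : ℝ) (x y : EuclideanSpace ℝ (Fin d)) : ℝ :=
  Real.exp (-α * ‖x - y‖ ^ 2)

/-- The sensitive group `S_b`, where group membership is given by `grp`
(`false` encodes `S₀` and `true` encodes `S₁`). -/
def sgrp {V : Type*} [Fintype V] (grp : V → Bool) (b : Bool) : Finset V :=
  Finset.univ.filter (fun i => grp i = b)

/-- Fairness-aware message passing: `F 0 = X`, and each layer `k ≥ 1` updates node `i`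
(lying in group `grp i`, with opposite group `!grp i`) by
`F⁽ᵏ⁾_i = X_i + (1/|N(i)|)·Σ_{u∈N(i)} F⁽ᵏ⁻¹⁾_u
       − (1/N_t²)·Σ_{u∈S_t} k(F⁽ᵏ⁻¹⁾_u,F⁽ᵏ⁻¹⁾_i)·F⁽ᵏ⁻¹⁾_u
       + (1/(N₀N₁))·Σ_{u∈S_{1−t}} k(F⁽ᵏ⁻¹⁾_u,F⁽ᵏ⁻¹⁾_i)·F⁽ᵏ⁻¹⁾_u
       + ((1/N_t²)·Σ_{u∈S_t} k(...) − (1/(N₀N₁))·Σ_{u∈S_{1−t}} k(...))·F⁽ᵏ⁻¹⁾_i`. -/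
def FairMP {V : Type*} [Fintype V] {d : ℕ} (α : ℝ) (grp : V → Bool)
    (Nb : V → Finset V) (X : V → EuclideanSpace ℝ (Fin d))
    (F : ℕ → V → EuclideanSpace ℝ (Fin d)) : Prop :=
  F 0 = X ∧
  ∀ k : ℕ, 1 ≤ k → ∀ i : V,
    F k i = X i + (((Nb i).card : ℝ)⁻¹) • ∑ u ∈ Nb i, F (k-1) u
      - (1 / ((sgrp grp (grp i)).card : ℝ) ^ 2) •
          ∑ u ∈ sgrp grp (grp i), ker α (F (k-1) u) (F (k-1) i) • F (k-1) u
      + (1 / (((sgrp grp false).card : ℝ) * ((sgrp grp true).card : ℝ))) •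
          ∑ u ∈ sgrp grp (!grp i), ker α (F (k-1) u) (F (k-1) i) • F (k-1) u
      + ((1 / ((sgrp grp (grp i)).card : ℝ) ^ 2) *
            ∑ u ∈ sgrp grp (grp i), ker α (F (k-1) u) (F (k-1) i)
         - (1 / (((sgrp grp false).card : ℝ) * ((sgrp grp true).card : ℝ))) *
            ∑ u ∈ sgrp grp (!grp i), ker α (F (k-1) u) (F (k-1) i)) • F (k-1) i

/-- Componentwise maximal deviation of the rows of `F` from the overall mean row:
`(dev F)_m = max_{i∈V} |F_{i,m} − (1/N)·Σ_{j∈V} F_{j,m}|`. -/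
noncomputable def dev {V : Type*} [Fintype V] {d : ℕ}
    (F : V → EuclideanSpace ℝ (Fin d)) : EuclideanSpace ℝ (Fin d) :=
  WithLp.toLp 2 (fun m => ⨆ i : V, |F i m - (1 / (Fintype.card V : ℝ)) * ∑ j : V, F j m|)

open scoped BigOperators

section Kernel

variable {d : ℕ}

lemma ker_comm (α : ℝ) (x y : EuclideanSpace ℝ (Fin d)) : ker α x y = ker α y x := by
  rw [ker, ker, norm_sub_rev]

lemma ker_nonneg (α : ℝ) (x y : EuclideanSpace ℝ (Fin d)) : 0 ≤ ker α x y :=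
  (Real.exp_pos _).le

lemma ker_le_one {α : ℝ} (hα : 0 ≤ α) (x y : EuclideanSpace ℝ (Fin d)) : ker α x y ≤ 1 :=
  Real.exp_le_one_iff.mpr <| mul_nonpos_of_nonpos_of_nonneg (neg_nonpos.mpr hα) (sq_nonneg _)

end Kernel

section Antisymmetric

variable {ι M : Type*} [AddCommGroup M] {g : ι → ι → M}

lemma sum_sum_add_sum_sum_eq_zero_of_antisymm (hg : ∀ i j, g i j = -g j i) (s t : Finset ι) :
    ∑ i ∈ s, ∑ j ∈ t, g i j + ∑ i ∈ t, ∑ j ∈ s, g i j = 0 := by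
  rw [sum_comm (s := t), ← sum_add_distrib]
  exact sum_eq_zero fun i _ ↦ by
    rw [← sum_add_distrib]
    exact sum_eq_zero fun j _ ↦ by rw [hg j i, add_neg_cancel]

lemma sum_sum_eq_zero_of_antisymm [IsAddTorsionFree M] (hg : ∀ i j, g i j = -g j i)
    (s : Finset ι) : ∑ i ∈ s, ∑ j ∈ s, g i j = 0 := by
  have h := sum_sum_add_sum_sum_eq_zero_of_antisymm hg s s
  rw [← two_nsmul] at h
  exact (nsmul_eq_zero_iff.mp h).resolve_right two_ne_zero

end Antisymmetric

lemma abs_expect_sub_le {ι : Type*} {s : Finset ι} (hs : s.Nonempty) {g : ι → ℝ} {c D : ℝ}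
    (h : ∀ j ∈ s, |g j - c| ≤ D) : |𝔼 j ∈ s, g j - c| ≤ D := by
  rw [← expect_const hs c, ← expect_sub_distrib]
  exact (abs_expect_le _ _).trans (expect_le hs h)

section MaxDeviation

variable {V : Type*} [Fintype V]

noncomputable def maxDev (f : V → ℝ) : ℝ :=
  ⨆ i, |f i - 𝔼 j, f j|

lemma dev_apply {d : ℕ} (G : V → EuclideanSpace ℝ (Fin d)) (m : Fin d) :
    dev G m = maxDev (fun i ↦ G i m) := by
  simp only [dev, maxDev, Fintype.expect_eq_sum_div_card, one_div, inv_mul_eq_div]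

lemma abs_sub_expect_le_maxDev (f : V → ℝ) (i : V) : |f i - 𝔼 j, f j| ≤ maxDev f :=
  le_ciSup (f := fun i ↦ |f i - 𝔼 j, f j|) (Finite.bddAbove_range _) i

lemma maxDev_nonneg (f : V → ℝ) : 0 ≤ maxDev f :=
  Real.iSup_nonneg fun _ ↦ abs_nonneg _

end MaxDeviation

lemma maxDev_add_add_le {V : Type*} [Fintype V] {x a t : V → ℝ} {c D E : ℝ}
    (ha : ∀ i, |a i - c| ≤ D) (ht : ∀ i, |t i| ≤ E) (ht_sum : ∑ i, t i = 0)
    (hD : 0 ≤ D) (hE : 0 ≤ E) :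
    maxDev (fun i ↦ x i + a i + t i) ≤ maxDev x + 2 * D + E := by
  have hnonneg : 0 ≤ maxDev x + 2 * D + E := by linarith [maxDev_nonneg x]
  refine Real.iSup_le (fun i ↦ ?_) hnonneg
  have hmean_a : |𝔼 j, a j - c| ≤ D := abs_expect_sub_le ⟨i, mem_univ i⟩ fun j _ ↦ ha j
  have hmean : 𝔼 j, (x j + a j + t j) = 𝔼 j, x j + 𝔼 j, a j := by
    rw [expect_add_distrib, expect_add_distrib, Fintype.expect_eq_sum_div_card (fun j ↦ t j),
      ht_sum, zero_div, add_zero]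
  calc |x i + a i + t i - 𝔼 j, (x j + a j + t j)|
      = |(x i - 𝔼 j, x j) + ((a i - c) - (𝔼 j, a j - c)) + t i| := by rw [hmean]; ring_nf
    _ ≤ |x i - 𝔼 j, x j| + |(a i - c) - (𝔼 j, a j - c)| + |t i| := abs_add_three _ _ _
    _ ≤ |x i - 𝔼 j, x j| + (|a i - c| + |𝔼 j, a j - c|) + |t i| := by gcongr; exact abs_sub _ _
    _ ≤ maxDev x + 2 * D + E := by
      linarith [abs_sub_expect_le_maxDev x i, ha i, ht i]

section FairnessTerm

variable {V : Type*} [Fintype V] (grp : V → Bool) (K : V → V → ℝ) (f : V → ℝ)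

noncomputable def fairTerm (i : V) : ℝ :=
  1 / (#(sgrp grp (grp i)) : ℝ) ^ 2 * ∑ u ∈ sgrp grp (grp i), K u i * (f i - f u)
    - 1 / ((#(sgrp grp false) : ℝ) * #(sgrp grp true)) *
      ∑ u ∈ sgrp grp (!grp i), K u i * (f i - f u)

lemma card_sgrp_false_mul_card_sgrp_true (b : Bool) :
    (#(sgrp grp false) : ℝ) * #(sgrp grp true) = #(sgrp grp b) * #(sgrp grp (!b)) := by
  cases b
  · rfl
  · exact mul_comm _ _

lemma sum_sgrp_fairTerm (b : Bool) :
    ∑ i ∈ sgrp grp b, fairTerm grp K f i =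
      1 / (#(sgrp grp b) : ℝ) ^ 2 * ∑ i ∈ sgrp grp b, ∑ u ∈ sgrp grp b, K u i * (f i - f u)
        - 1 / ((#(sgrp grp false) : ℝ) * #(sgrp grp true)) *
          ∑ i ∈ sgrp grp b, ∑ u ∈ sgrp grp (!b), K u i * (f i - f u) := by
  rw [mul_sum, mul_sum, ← sum_sub_distrib]
  refine sum_congr rfl fun i hi ↦ ?_
  obtain rfl : grp i = b := (mem_filter.mp hi).2
  rfl

lemma sum_fairTerm_eq_zero (hK : ∀ u v, K u v = K v u) : ∑ i, fairTerm grp K f i = 0 := by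
  have hanti : ∀ i u, K u i * (f i - f u) = -(K i u * (f u - f i)) := fun i u ↦ by
    rw [hK u i]; ring
  rw [← sum_fiberwise univ grp, Fintype.sum_bool]
  change ∑ i ∈ sgrp grp true, _ + ∑ i ∈ sgrp grp false, _ = 0
  rw [sum_sgrp_fairTerm, sum_sgrp_fairTerm, sum_sum_eq_zero_of_antisymm hanti,
    sum_sum_eq_zero_of_antisymm hanti, Bool.not_true, Bool.not_false]
  linear_combination (-1 / ((#(sgrp grp false) : ℝ) * #(sgrp grp true))) *
    sum_sum_add_sum_sum_eq_zero_of_antisymm hanti (sgrp grp true) (sgrp grp false)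

variable {grp K f}

lemma abs_fairTerm_le (hK₀ : ∀ u v, 0 ≤ K u v) (hK₁ : ∀ u v, K u v ≤ 1) {c D : ℝ}
    (hf : ∀ u, |f u - c| ≤ D) (i : V) :
    |fairTerm grp K f i| ≤ (4 / #(sgrp grp false) + 4 / #(sgrp grp true)) * D := by
  have hsum : ∀ s : Finset V, |∑ u ∈ s, K u i * (f i - f u)| ≤ #s * (2 * D) := fun s ↦ by
    refine (abs_sum_le_sum_abs _ _).trans ?_
    refine (sum_le_card_nsmul _ _ _ fun u _ ↦ ?_).trans (nsmul_eq_mul _ _).le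
    have hdiff : |f i - f u| ≤ 2 * D := by
      calc |f i - f u| = |(f i - c) - (f u - c)| := by ring_nf
        _ ≤ |f i - c| + |f u - c| := abs_sub _ _
        _ ≤ 2 * D := by linarith [hf i, hf u]
    rw [abs_mul, abs_of_nonneg (hK₀ u i)]
    exact (mul_le_of_le_one_left (abs_nonneg _) (hK₁ u i)).trans hdiff
  have hp_le : ∀ b, 4 / (#(sgrp grp b) : ℝ) ≤ 4 / #(sgrp grp false) + 4 / #(sgrp grp true) := by
    have h₀ : 0 ≤ 4 / (#(sgrp grp false) : ℝ) := by positivity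
    have h₁ : 0 ≤ 4 / (#(sgrp grp true) : ℝ) := by positivity
    intro b
    cases b <;> linarith
  set p : ℝ := (#(sgrp grp (grp i)) : ℝ)
  set q : ℝ := (#(sgrp grp (!grp i)) : ℝ)
  have hp : 1 ≤ p := Nat.one_le_cast.mpr (card_pos.mpr ⟨i, mem_filter.mpr ⟨mem_univ i, rfl⟩⟩)
  have hD : 0 ≤ D := (abs_nonneg _).trans (hf i)
  have hq : 0 ≤ q := Nat.cast_nonneg _
  have hpq : q / (p * q) ≤ 1 / p := by
    rcases hq.eq_or_lt with hq0 | hq0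
    · rw [← hq0, zero_div]; positivity
    · rw [mul_comm, ← div_div, div_self hq0.ne']
  unfold fairTerm
  rw [card_sgrp_false_mul_card_sgrp_true grp (grp i)]
  calc _ ≤ 1 / p ^ 2 * (p * (2 * D)) + 1 / (p * q) * (q * (2 * D)) := by
        refine (abs_sub _ _).trans (add_le_add ?_ ?_) <;>
          rw [abs_mul, abs_of_nonneg (by positivity)] <;> gcongr <;> exact hsum _
    _ = 1 / p * (2 * D) + q / (p * q) * (2 * D) := by field_simp
    _ ≤ 1 / p * (2 * D) + 1 / p * (2 * D) := by gcongr
    _ = 4 / p * D := by ring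
    _ ≤ _ := mul_le_mul_of_nonneg_right (hp_le (grp i)) hD

end FairnessTerm

section MessagePassing

variable {V : Type*} [Fintype V] {d : ℕ} {α : ℝ} {grp : V → Bool} {Nb : V → Finset V}
  {X : V → EuclideanSpace ℝ (Fin d)} {F : ℕ → V → EuclideanSpace ℝ (Fin d)}

lemma FairMP.apply_coord (hF : FairMP α grp Nb X F) {k : ℕ} (hk : 1 ≤ k) (i : V) (m : Fin d) :
    F k i m = X i m + 𝔼 u ∈ Nb i, F (k - 1) u m
      + fairTerm grp (fun u v ↦ ker α (F (k - 1) u) (F (k - 1) v)) (fun u ↦ F (k - 1) u m) i := by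
  rw [hF.2 k hk i, expect_eq_sum_div_card, div_eq_inv_mul, fairTerm]
  simp only [PiLp.add_apply, PiLp.sub_apply, PiLp.smul_apply, WithLp.ofLp_sum, Finset.sum_apply,
    smul_eq_mul, mul_sub, sum_sub_distrib, ← sum_mul]
  ring

lemma FairMP.dev_apply_le (hα : 0 ≤ α) (hNb : ∀ i, (Nb i).Nonempty) (hF : FairMP α grp Nb X F)
    {k : ℕ} (hk : 1 ≤ k) (m : Fin d) :
    dev (F k) m ≤ (2 + 4 / #(sgrp grp false) + 4 / #(sgrp grp true)) * dev (F (k - 1)) m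
      + dev (F 0) m := by
  set f : V → ℝ := fun u ↦ F (k - 1) u m
  set K : V → V → ℝ := fun u v ↦ ker α (F (k - 1) u) (F (k - 1) v)
  have hf := abs_sub_expect_le_maxDev f
  have hstep : maxDev (fun i ↦ F k i m) ≤ maxDev (fun i ↦ X i m) + 2 * maxDev f
      + (4 / #(sgrp grp false) + 4 / #(sgrp grp true)) * maxDev f := by
    simp only [hF.apply_coord hk]
    exact maxDev_add_add_le (fun i ↦ abs_expect_sub_le (hNb i) fun u _ ↦ hf u)
      (abs_fairTerm_le (fun _ _ ↦ ker_nonneg _ _ _) (fun _ _ ↦ ker_le_one hα _ _) hf)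
      (sum_fairTerm_eq_zero grp K f fun _ _ ↦ ker_comm _ _ _) (maxDev_nonneg f)
      (mul_nonneg (by positivity) (maxDev_nonneg f))
  rw [dev_apply, dev_apply, dev_apply, hF.1]
  linarith

end MessagePassing

lemma EuclideanSpace.norm_le_norm_of_le {ι : Type*} [Fintype ι] {v w : EuclideanSpace ℝ ι}
    (h₀ : ∀ m, 0 ≤ v m) (h : ∀ m, v m ≤ w m) : ‖v‖ ≤ ‖w‖ := by
  rw [EuclideanSpace.norm_eq, EuclideanSpace.norm_eq]
  gcongr with m
  rw [Real.norm_of_nonneg (h₀ m), Real.norm_of_nonneg ((h₀ m).trans (h m))]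
  exact h m

theorem stmt9_general {V : Type*} [Fintype V] {d : ℕ} {α : ℝ} (hα : 0 < α)
    (grp : V → Bool) (N₀ N₁ : ℕ)
    (hcard0 : (sgrp grp false).card = N₀) (hcard1 : (sgrp grp true).card = N₁)
    (Nb : V → Finset V) (hNb : ∀ i, (Nb i).Nonempty)
    (X : V → EuclideanSpace ℝ (Fin d)) (F : ℕ → V → EuclideanSpace ℝ (Fin d))
    (hF : FairMP α grp Nb X F) :
    ∀ k : ℕ, 1 ≤ k →
      ‖dev (F k)‖ ≤ (2 + 4 / (N₀ : ℝ) + 4 / (N₁ : ℝ)) * ‖dev (F (k - 1))‖ + 2 * ‖dev (F 0)‖ := by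
  subst hcard0 hcard1
  intro k hk
  set C : ℝ := 2 + 4 / #(sgrp grp false) + 4 / #(sgrp grp true)
  have hC : 0 ≤ C := by positivity
  calc ‖dev (F k)‖ ≤ ‖C • dev (F (k - 1)) + dev (F 0)‖ := by
        refine EuclideanSpace.norm_le_norm_of_le (fun m ↦ ?_) fun m ↦ ?_
        · rw [dev_apply]; exact maxDev_nonneg _
        · simpa using hF.dev_apply_le hα.le hNb hk m
    _ ≤ C * ‖dev (F (k - 1))‖ + ‖dev (F 0)‖ := by
        refine (norm_add_le _ _).trans_eq ?_
        rw [norm_smul, Real.norm_of_nonneg hC]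
    _ ≤ C * ‖dev (F (k - 1))‖ + 2 * ‖dev (F 0)‖ := by linarith [norm_nonneg (dev (F 0))]

/-- For every `k ≥ 1`, `‖Δᵏ‖ ≤ (2 + 4/N₀ + 4/N₁)·‖Δᵏ⁻¹‖ + 2·‖Δ⁰‖`. -/
theorem stmt9 {V : Type*} [Fintype V] {d : ℕ} {α : ℝ} (hα : 0 < α)
    (grp : V → Bool) (N₀ N₁ : ℕ)
    (hcard0 : (sgrp grp false).card = N₀) (hcard1 : (sgrp grp true).card = N₁)
    (hN₀ : 1 ≤ N₀) (hN₁ : 1 ≤ N₁)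
    (Nb : V → Finset V) (hNb : ∀ i, (Nb i).Nonempty)
    (X : V → EuclideanSpace ℝ (Fin d)) (F : ℕ → V → EuclideanSpace ℝ (Fin d))
    (hF : FairMP α grp Nb X F) :
    ∀ k : ℕ, 1 ≤ k →
      ‖dev (F k)‖ ≤ (2 + 4 / (N₀ : ℝ) + 4 / (N₁ : ℝ)) * ‖dev (F (k - 1))‖ + 2 * ‖dev (F 0)‖ :=
  stmt9_general hα grp N₀ N₁ hcard0 hcard1 Nb hNb X F hF
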